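/- There is no finite nonempty sequence μ₁, …, μ_r of probability mass functions on the symmetric group S₃, where each μ_i is either (a) a point mass δ_π for some permutation π ∈ S₃ (a deterministic permutation), (b) the uniform distribution on {id, τ} for some transposition τ ∈ S₃ (a 2-card random cut), or (c) the uniform distribution on {id, c, c²} for some 3-cycle c ∈ S₃ (a 3-card random cut), such that the iterated convolution μ₁ * μ₂ * ⋯ * μ_r equals the uniform distribution on the two-element set {id, (1 2 3)}. -/

import Mathlib

open Finset

variable {G : Type*} [Group G] [Fintype G] [DecidableEq G]

/-- Convolution of two mass functions on a finite group:
`(μ * ν)(g) = ∑ h, μ(h) · ν(h⁻¹ g)`. -/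
def convol (μ ν : G → ℝ) : G → ℝ := fun g => ∑ h : G, μ h * ν (h⁻¹ * g)

/-- Point mass `δ_π`. -/
def delta (π : G) : G → ℝ := fun g => if g = π then 1 else 0

/-- Uniform distribution on a finite subset `S`: probability `1/|S|` on each
element of `S` and `0` elsewhere. -/
noncomputable def unif (S : Finset G) : G → ℝ := fun g => if g ∈ S then (S.card : ℝ)⁻¹ else 0

/-- Iterated convolution `μ₁ * μ₂ * ⋯ * μ_r` of a list of mass functions
(the empty list yields the point mass at the identity, a neutral element
for convolution). -/
noncomputable def convList (L : List (G → ℝ)) : G → ℝ := L.foldr convol (delta 1)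

/-- `μ` is a probability mass function on the finite group `G`. -/
def IsPMF (μ : G → ℝ) : Prop := (∀ g, 0 ≤ μ g) ∧ ∑ g, μ g = 1

/-!
Three invariants of iterated convolutions on `S₃` rule out the target `unif {id, (1 2 3)}`.
The sign coefficient `∑ g, sign g · μ g` is multiplicative under convolution; it vanishes on a
2-card cut but equals `1` on the target. A 3-card cut is uniform on the normal subgroup `A₃`, so
once it occurs the product is left `A₃`-invariant, which the target is not. Finally, products of
point masses are point masses, which the target is not either.
-/

theorem convList_cons (μ : G → ℝ) (L : List (G → ℝ)) :
    convList (μ :: L) = convol μ (convList L) := rfl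

theorem convList_append_cons (s t : List (G → ℝ)) (μ : G → ℝ) :
    convList (s ++ μ :: t) = s.foldr convol (convol μ (convList t)) := by
  rw [convList, List.foldr_append]
  rfl

section Character

/-- The coefficient of `μ` at a one-dimensional character `χ`. -/
noncomputable def charSum (χ : G →* ℝ) (μ : G → ℝ) : ℝ := ∑ g, χ g * μ g

theorem charSum_convol {G : Type*} [Group G] [Fintype G] (χ : G →* ℝ) (μ ν : G → ℝ) :
    charSum χ (convol μ ν) = charSum χ μ * charSum χ ν := calc
  charSum χ (convol μ ν) = ∑ h, ∑ g, χ g * (μ h * ν (h⁻¹ * g)) := by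
    simp only [charSum, convol, Finset.mul_sum]
    exact Finset.sum_comm
  _ = ∑ h, ∑ k, χ (h * k) * (μ h * ν k) := Finset.sum_congr rfl fun h _ => by
    rw [← Equiv.sum_comp (Equiv.mulLeft h)]
    simp only [Equiv.coe_mulLeft, inv_mul_cancel_left]
  _ = charSum χ μ * charSum χ ν := by
    simp only [charSum, Finset.sum_mul_sum, map_mul]
    exact Finset.sum_congr rfl fun h _ => Finset.sum_congr rfl fun k _ => by ring

theorem charSum_convList_eq_zero_of_mem (χ : G →* ℝ) {L : List (G → ℝ)} {μ : G → ℝ}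
    (hμ : μ ∈ L) (h : charSum χ μ = 0) : charSum χ (convList L) = 0 := by
  induction L with
  | nil => simp at hμ
  | cons a t ih =>
    rw [convList_cons, charSum_convol]
    rcases List.mem_cons.mp hμ with rfl | hμ
    · rw [h, zero_mul]
    · rw [ih hμ, mul_zero]

theorem charSum_unif (χ : G →* ℝ) (S : Finset G) :
    charSum χ (unif S) = (∑ g ∈ S, χ g) / #S := by
  simp only [charSum, unif, mul_ite, mul_zero, Finset.sum_ite_mem, Finset.univ_inter,
    ← Finset.sum_mul, div_eq_mul_inv]

end Character

section Sign

variable {α : Type*} [Fintype α] [DecidableEq α]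

def signChar : Equiv.Perm α →* ℝ :=
  ((Int.castRingHom ℝ).toMonoidHom.comp (Units.coeHom ℤ)).comp Equiv.Perm.sign

theorem signChar_apply (σ : Equiv.Perm α) : signChar σ = ((Equiv.Perm.sign σ : ℤ) : ℝ) := rfl

theorem charSum_signChar_unif_pair {σ : Equiv.Perm α} (hσ : σ ≠ 1) :
    charSum signChar (unif {1, σ}) = (1 + (Equiv.Perm.sign σ : ℤ)) / 2 := by
  rw [charSum_unif, Finset.sum_pair hσ.symm, Finset.card_pair hσ.symm, map_one,
    signChar_apply]
  norm_num

theorem charSum_signChar_unif_swap {τ : Equiv.Perm α} (hτ : τ.IsSwap) :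
    charSum signChar (unif {1, τ}) = 0 := by
  obtain ⟨x, y, hxy, rfl⟩ := hτ
  rw [charSum_signChar_unif_pair (mt Equiv.swap_eq_one_iff.mp hxy), Equiv.Perm.sign_swap hxy]
  norm_num

end Sign

section Invariance

def IsLeftInvariant (H : Subgroup G) (μ : G → ℝ) : Prop := ∀ h ∈ H, ∀ g, μ (h * g) = μ g

theorem IsLeftInvariant.convol_left {G : Type*} [Group G] [Fintype G] {H : Subgroup G}
    {μ : G → ℝ} (hμ : IsLeftInvariant H μ) (ν : G → ℝ) : IsLeftInvariant H (convol μ ν) := by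
  intro h hh g
  rw [convol, ← Equiv.sum_comp (Equiv.mulLeft h)]
  refine Finset.sum_congr rfl fun k _ => ?_
  simp only [Equiv.coe_mulLeft, hμ h hh, mul_inv_rev, mul_assoc, inv_mul_cancel_left]

theorem IsLeftInvariant.convol_right {G : Type*} [Group G] [Fintype G] {H : Subgroup G}
    [H.Normal] (μ : G → ℝ) {ν : G → ℝ} (hν : IsLeftInvariant H ν) :
    IsLeftInvariant H (convol μ ν) := by
  intro h hh g
  refine Finset.sum_congr rfl fun k _ => ?_
  rw [show k⁻¹ * (h * g) = k⁻¹ * h * k * (k⁻¹ * g) by group,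
    hν _ (by simpa using Subgroup.Normal.conj_mem' ‹_› h hh k)]

theorem IsLeftInvariant.foldr_convol {G : Type*} [Group G] [Fintype G] {H : Subgroup G}
    [H.Normal] {ν : G → ℝ} (hν : IsLeftInvariant H ν) (L : List (G → ℝ)) :
    IsLeftInvariant H (L.foldr convol ν) := by
  induction L with
  | nil => exact hν
  | cons μ L ih => exact ih.convol_right μ

theorem isLeftInvariant_convList_of_mem {H : Subgroup G} [H.Normal] {L : List (G → ℝ)}
    {μ : G → ℝ} (hμL : μ ∈ L) (hμ : IsLeftInvariant H μ) : IsLeftInvariant H (convList L) := by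
  obtain ⟨s, t, rfl⟩ := List.append_of_mem hμL
  rw [convList_append_cons]
  exact (hμ.convol_left _).foldr_convol s

theorem isLeftInvariant_unif {G : Type*} [Group G] [DecidableEq G] {H : Subgroup G}
    {S : Finset G} (hS : ∀ g, g ∈ S ↔ g ∈ H) : IsLeftInvariant H (unif S) := by
  intro h hh g
  refine if_congr ?_ rfl rfl
  rw [hS, hS, H.mul_mem_cancel_left hh]

end Invariance

section PointMass

theorem convol_delta (π : G) (ν : G → ℝ) : convol (delta π) ν = fun g => ν (π⁻¹ * g) := by
  ext g
  simp [convol, delta]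

theorem exists_convList_eq_delta {L : List (G → ℝ)} (hL : ∀ μ ∈ L, ∃ π, μ = delta π) :
    ∃ π, convList L = delta π := by
  induction L with
  | nil => exact ⟨1, rfl⟩
  | cons μ L ih =>
    obtain ⟨π, rfl⟩ := hL μ List.mem_cons_self
    obtain ⟨σ, hσ⟩ := ih fun ν hν => hL ν (List.mem_cons_of_mem _ hν)
    refine ⟨π * σ, ?_⟩
    ext g
    simp only [convList_cons, hσ, convol_delta, delta, inv_mul_eq_iff_eq_mul]

end PointMass

section SymmetricGroupThree

local notation "S₃" => Equiv.Perm (Fin 3)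

theorem mem_threeCycle_cut_iff {c : S₃} (hc : c.IsThreeCycle) (g : S₃) :
    g ∈ ({1, c, c ^ 2} : Finset S₃) ↔ g ∈ alternatingGroup (Fin 3) := by
  rw [Equiv.Perm.mem_alternatingGroup]
  have hsign := hc.sign
  have hne := hc.ne_one
  clear hc
  revert g c
  decide

theorem charSum_signChar_unif_finRotate :
    charSum signChar (unif {1, finRotate 3}) = 1 := by
  rw [charSum_signChar_unif_pair (by decide), show Equiv.Perm.sign (finRotate 3) = 1 by decide]
  norm_num

theorem not_isLeftInvariant_unif_finRotate :
    ¬ IsLeftInvariant (alternatingGroup (Fin 3)) (unif {1, finRotate 3}) := by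
  intro h
  have := h (finRotate 3) (Equiv.Perm.mem_alternatingGroup.mpr (by decide)) (finRotate 3)
  simp only [unif] at this
  rw [if_neg (by decide), if_pos (by decide), Finset.card_pair (by decide)] at this
  norm_num at this

theorem unif_finRotate_ne_delta (π : S₃) : unif {1, finRotate 3} ≠ delta π := by
  intro h
  have := congrFun h 1
  rw [unif, delta, if_pos (by decide), Finset.card_pair (by decide)] at this
  split_ifs at this <;> norm_num at this

end SymmetricGroupThree

/-- The shuffle `{id, (1 2 3)}` cannot be realized by any finite nonempty
sequence of deterministic permutations and 2- or 3-card random cuts on `S₃`. -/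
theorem stmt2 :
    ¬ ∃ L : List (Equiv.Perm (Fin 3) → ℝ), L ≠ [] ∧
      (∀ μ ∈ L,
        (∃ π : Equiv.Perm (Fin 3), μ = delta π) ∨
        (∃ τ : Equiv.Perm (Fin 3), τ.IsSwap ∧ μ = unif {1, τ}) ∨
        (∃ c : Equiv.Perm (Fin 3), c.IsThreeCycle ∧ μ = unif {1, c, c ^ 2})) ∧
      convList L = unif {1, finRotate 3} := by
  rintro ⟨L, -, hL, hconv⟩
  by_cases hswap : ∃ μ ∈ L, ∃ τ : Equiv.Perm (Fin 3), τ.IsSwap ∧ μ = unif {1, τ}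
  · obtain ⟨_, hμ, τ, hτ, rfl⟩ := hswap
    have := charSum_convList_eq_zero_of_mem signChar hμ (charSum_signChar_unif_swap hτ)
    rw [hconv, charSum_signChar_unif_finRotate] at this
    exact one_ne_zero this
  by_cases hcut : ∃ μ ∈ L, ∃ c : Equiv.Perm (Fin 3), c.IsThreeCycle ∧ μ = unif {1, c, c ^ 2}
  · obtain ⟨_, hμ, c, hc, rfl⟩ := hcut
    have := isLeftInvariant_convList_of_mem hμ (isLeftInvariant_unif (mem_threeCycle_cut_iff hc))
    exact not_isLeftInvariant_unif_finRotate (hconv ▸ this)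
  push Not at hswap hcut
  obtain ⟨π, hπ⟩ := exists_convList_eq_delta fun μ hμ =>
    (hL μ hμ).resolve_right fun h => h.elim (fun ⟨τ, hτ, h⟩ => hswap μ hμ τ hτ h)
      fun ⟨c, hc, h⟩ => hcut μ hμ c hc h
  exact unif_finRotate_ne_delta π (hconv.symm.trans hπ)
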